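/- arXiv:0901.0383 — 2 statements merged into one kernel-verified Lean document; each statement's English description precedes it below -/
import Mathlib

section
/- Fix z ∈ ℝ. The derivative of Stein's solution f_z is given explicitly by: f_z′(x) = Φ̄(z)·(1 + √(2π)(1 − Φ̄(x)) x e^{x²/2}) for every x < z, and f_z′(x) = (1 − Φ̄(z))·(−1 + √(2π) Φ̄(x) x e^{x²/2}) for every x > z. -/
open MeasureTheory

/-- The standard normal tail function `Φ̄(u) = (1/√(2π)) ∫_u^∞ e^{-x²/2} dx`. -/
noncomputable def gaussTail (u : ℝ) : ℝ :=
  (Real.sqrt (2 * Real.pi))⁻¹ * ∫ x in Set.Ioi u, Real.exp (-x ^ 2 / 2)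

/-- Stein's solution `f_z` of Stein's equation for the test function `h = 1_{(-∞,z]}`. -/
noncomputable def steinSol (z x : ℝ) : ℝ :=
  if x ≤ z then
    Real.sqrt (2 * Real.pi) * Real.exp (x ^ 2 / 2) * (1 - gaussTail x) * gaussTail z
  else
    Real.sqrt (2 * Real.pi) * Real.exp (x ^ 2 / 2) * (1 - gaussTail z) * gaussTail x

lemma gauss_integrable : Integrable (fun x : ℝ => Real.exp (-x ^ 2 / 2)) := by
  have := integrable_exp_neg_mul_sq (by norm_num : (0:ℝ) < 1/2)
  convert this using 2 with x
  ring_nf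

lemma gaussTail_hasDerivAt (u : ℝ) :
    HasDerivAt gaussTail (-((Real.sqrt (2 * Real.pi))⁻¹ * Real.exp (-u ^ 2 / 2))) u := by
  set g : ℝ → ℝ := fun x => Real.exp (-x ^ 2 / 2) with hg
  have hint := gauss_integrable
  have heq : gaussTail = fun u =>
      (Real.sqrt (2 * Real.pi))⁻¹ *
        ((∫ x, g x) - ((∫ x in Set.Iic (0:ℝ), g x) + ∫ x in (0:ℝ)..u, g x)) := by
    funext v
    have h1 : (∫ x in (0:ℝ)..v, g x) = (∫ x in Set.Iic v, g x) - ∫ x in Set.Iic (0:ℝ), g x :=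
      (intervalIntegral.integral_Iic_sub_Iic hint.integrableOn hint.integrableOn).symm
    have h2 : (∫ x in Set.Iic v, g x) + (∫ x in Set.Ioi v, g x) = ∫ x, g x := by
      rw [← setIntegral_union (by simp [Set.disjoint_left]) measurableSet_Ioi
        hint.integrableOn hint.integrableOn, Set.Iic_union_Ioi, setIntegral_univ]
    have h3 : (∫ x in Set.Ioi v, g x) = (∫ x, g x) - ∫ x in Set.Iic v, g x := by linarith
    simp only [gaussTail]
    rw [h3, h1]
    ring
  rw [heq]
  have hderiv : HasDerivAt (fun v => ∫ x in (0:ℝ)..v, g x) (g u) u :=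
    intervalIntegral.integral_hasDerivAt_right hint.intervalIntegrable
      hint.aestronglyMeasurable.stronglyMeasurableAtFilter
      (by fun_prop)
  have := (((hasDerivAt_const u (∫ x, g x)).sub
      ((hasDerivAt_const u (∫ x in Set.Iic (0:ℝ), g x)).add hderiv)).const_mul
      (Real.sqrt (2 * Real.pi))⁻¹)
  simpa using this

lemma aux_exp (x : ℝ) : HasDerivAt (fun y : ℝ => Real.exp (y ^ 2 / 2))
    (x * Real.exp (x ^ 2 / 2)) x := by
  have h : HasDerivAt (fun y : ℝ => y ^ 2 / 2) x x := by
    simpa using (hasDerivAt_pow 2 x).div_const 2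
  simpa [mul_comm] using h.exp

/-- Explicit formula for the derivative of Stein's solution off the point `z`. -/
theorem stein_deriv_formula (z : ℝ) :
    (∀ x : ℝ, x < z → HasDerivAt (steinSol z)
        (gaussTail z *
          (1 + Real.sqrt (2 * Real.pi) * (1 - gaussTail x) * x * Real.exp (x ^ 2 / 2))) x) ∧
    (∀ x : ℝ, z < x → HasDerivAt (steinSol z)
        ((1 - gaussTail z) *
          (-1 + Real.sqrt (2 * Real.pi) * gaussTail x * x * Real.exp (x ^ 2 / 2))) x) := by
  have hA : Real.sqrt (2 * Real.pi) ≠ 0 := by positivity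
  constructor
  · intro x hx
    have hE : Real.exp (x ^ 2 / 2) * Real.exp (-x ^ 2 / 2) = 1 := by
      rw [← Real.exp_add, show x ^ 2 / 2 + -x ^ 2 / 2 = 0 by ring, Real.exp_zero]
    have heq : steinSol z =ᶠ[nhds x]
        fun y => Real.sqrt (2 * Real.pi) * Real.exp (y ^ 2 / 2) * (1 - gaussTail y) *
          gaussTail z := by
      filter_upwards [Iio_mem_nhds hx] with y hy
      simp only [steinSol, if_pos (Set.mem_Iio.mp hy).le]
    have h2 : HasDerivAt (fun y => 1 - gaussTail y)
        ((Real.sqrt (2 * Real.pi))⁻¹ * Real.exp (-x ^ 2 / 2)) x := by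
      simpa using (gaussTail_hasDerivAt x).const_sub 1
    have h := ((((aux_exp x).const_mul (Real.sqrt (2 * Real.pi))).mul h2).mul_const
      (gaussTail z)).congr_of_eventuallyEq heq
    have hK : Real.sqrt (2 * Real.pi) * (Real.sqrt (2 * Real.pi))⁻¹ = 1 := mul_inv_cancel₀ hA
    convert h using 1
    · rfl
    · rfl
    linear_combination (- gaussTail z * (Real.exp (x ^ 2 / 2) * Real.exp (-x ^ 2 / 2))) * hK -
      gaussTail z * hE
  · intro x hx
    have hE : Real.exp (x ^ 2 / 2) * Real.exp (-x ^ 2 / 2) = 1 := by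
      rw [← Real.exp_add, show x ^ 2 / 2 + -x ^ 2 / 2 = 0 by ring, Real.exp_zero]
    have hK : Real.sqrt (2 * Real.pi) * (Real.sqrt (2 * Real.pi))⁻¹ = 1 := mul_inv_cancel₀ hA
    have heq : steinSol z =ᶠ[nhds x]
        fun y => Real.sqrt (2 * Real.pi) * Real.exp (y ^ 2 / 2) * (1 - gaussTail z) *
          gaussTail y := by
      filter_upwards [Ioi_mem_nhds hx] with y hy
      simp only [steinSol, if_neg (not_le.mpr (Set.mem_Ioi.mp hy))]
    have h := ((((aux_exp x).const_mul (Real.sqrt (2 * Real.pi))).mul_const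
      (1 - gaussTail z)).mul (gaussTail_hasDerivAt x)).congr_of_eventuallyEq heq
    convert h using 1
    · rfl
    · rfl
    linear_combination ((1 - gaussTail z) * (Real.exp (x ^ 2 / 2) * Real.exp (-x ^ 2 / 2))) * hK +
      (1 - gaussTail z) * hE
end

section
/- Fix z > 0. For every x > z, the derivative of Stein's solution satisfies −1/(1+x²) ≤ f_z′(x) ≤ 0; in particular |f_z′(x)| ≤ 1/(1+z²) for all x > z. -/
open MeasureTheory

open Real Set Filter

noncomputable def phi (t : ℝ) : ℝ := Real.exp (-t ^ 2 / 2)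

lemma phi_eq (t : ℝ) : phi t = Real.exp (-(1/2) * t ^ 2) := by
  unfold phi; congr 1; ring

lemma phi_pos (t : ℝ) : 0 < phi t := Real.exp_pos _

lemma phi_integrable : Integrable phi := by
  have := integrable_exp_neg_mul_sq (b := (1/2 : ℝ)) (by norm_num)
  rw [show phi = fun x => Real.exp (-(1/2 : ℝ) * x ^ 2) from funext phi_eq]
  exact this

lemma phi_total : ∫ t : ℝ, phi t = Real.sqrt (2 * Real.pi) := by
  have := integral_gaussian (1/2)
  simp only [← phi_eq] at this
  rw [this]
  norm_num
  ring

lemma id_mul_phi_integrable : Integrable (fun t => t * phi t) := by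
  have := integrable_mul_exp_neg_mul_sq (b := (1/2 : ℝ)) (by norm_num)
  rw [show (fun t => t * phi t) = fun x => x * Real.exp (-(1/2 : ℝ) * x ^ 2) from
    funext fun t => by rw [phi_eq]]
  exact this

lemma hasDerivAt_phi (t : ℝ) : HasDerivAt phi (-t * phi t) t := by
  have h1 : HasDerivAt (fun s : ℝ => -s ^ 2 / 2) (-t) t := by
    have := ((hasDerivAt_pow 2 t).neg.div_const 2)
    exact this.congr_deriv (by norm_num; ring)
  have := h1.exp
  have h2 : HasDerivAt (fun s => Real.exp (-s ^ 2 / 2)) (-t * phi t) t := by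
    convert this using 1
    unfold phi
    ring
  exact h2

lemma phi_tendsto : Tendsto phi atTop (nhds 0) := by
  have h1 : Tendsto (fun t : ℝ => t ^ 2 / 2) atTop atTop :=
    (tendsto_pow_atTop (by norm_num)).atTop_div_const (by norm_num)
  have := tendsto_exp_neg_atTop_nhds_zero.comp h1
  refine this.congr fun t => ?_
  simp [phi, Function.comp, neg_div]

noncomputable def tailI (x : ℝ) : ℝ := ∫ t in Set.Ioi x, phi t

lemma tailI_nonneg (x : ℝ) : 0 ≤ tailI x :=
  setIntegral_nonneg measurableSet_Ioi fun t _ => (phi_pos t).le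

lemma tailI_le_total (x : ℝ) : tailI x ≤ Real.sqrt (2 * Real.pi) := by
  rw [← phi_total]
  exact setIntegral_le_integral phi_integrable (Filter.Eventually.of_forall fun t => (phi_pos t).le)

lemma hasDerivAt_tailI (x : ℝ) : HasDerivAt tailI (-phi x) x := by
  have heq : tailI = fun u => ((∫ t : ℝ, phi t) - ∫ t in Set.Iic 0, phi t) - ∫ t in (0:ℝ)..u, phi t := by
    funext u
    have h1 : (∫ t in Set.Iic u, phi t) + ∫ t in Set.Ioi u, phi t = ∫ t : ℝ, phi t := by
      simpa using integral_add_compl (measurableSet_Iic (a := u)) phi_integrable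
    have h2 : (∫ t in Set.Iic u, phi t) - (∫ t in Set.Iic 0, phi t) = ∫ t in (0:ℝ)..u, phi t :=
      intervalIntegral.integral_Iic_sub_Iic phi_integrable.integrableOn phi_integrable.integrableOn
    unfold tailI
    rw [← h2]
    linarith
  rw [heq]
  have hF : HasDerivAt (fun u => ∫ t in (0:ℝ)..u, phi t) (phi x) x :=
    intervalIntegral.integral_hasDerivAt_right phi_integrable.intervalIntegrable
      (phi_integrable.aestronglyMeasurable.stronglyMeasurableAtFilter)
      (Continuous.continuousAt (by unfold phi; continuity))
  exact ((hasDerivAt_const x _).sub hF).congr_deriv (by simp)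

lemma mills_upper {x : ℝ} (hx : 0 < x) : x * tailI x ≤ phi x := by
  have hkey : ∫ t in Set.Ioi x, t * phi t = phi x := by
    have := integral_Ioi_of_hasDerivAt_of_tendsto' (f := fun t => -phi t)
      (f' := fun t => t * phi t) (a := x) (m := 0)
      (fun t _ => (hasDerivAt_phi t).neg.congr_deriv (by ring))
      id_mul_phi_integrable.integrableOn
      (by simpa using phi_tendsto.neg)
    simpa using this
  have hmono : tailI x ≤ x⁻¹ * phi x := by
    have h1 : tailI x ≤ ∫ t in Set.Ioi x, x⁻¹ * (t * phi t) := by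
      refine setIntegral_mono_on phi_integrable.integrableOn
        ((id_mul_phi_integrable.integrableOn).const_mul _) measurableSet_Ioi ?_
      intro t ht
      have h1 : 1 ≤ x⁻¹ * t := by
        rw [← div_eq_inv_mul]
        exact (one_le_div hx).mpr (le_of_lt ht)
      nlinarith [(phi_pos t).le, mul_le_mul_of_nonneg_right h1 (phi_pos t).le]
    rw [MeasureTheory.integral_const_mul, hkey] at h1
    exact h1
  calc x * tailI x ≤ x * (x⁻¹ * phi x) := by
        exact mul_le_mul_of_nonneg_left hmono hx.le
    _ = phi x := by field_simp

noncomputable def gfun (t : ℝ) : ℝ := t / (1 + t ^ 2) * phi t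

lemma one_add_sq_pos (t : ℝ) : (0:ℝ) < 1 + t ^ 2 := by positivity

lemma hasDerivAt_gfun (t : ℝ) :
    HasDerivAt gfun (phi t * (1 - 2 * t ^ 2 - t ^ 4) / (1 + t ^ 2) ^ 2) t := by
  have hden : (1 + t ^ 2) ≠ 0 := (one_add_sq_pos t).ne'
  have h1 : HasDerivAt (fun s : ℝ => s / (1 + s ^ 2))
      ((1 * (1 + t ^ 2) - t * (2 * t)) / (1 + t ^ 2) ^ 2) t := by
    have hu : HasDerivAt (fun s : ℝ => s) 1 t := hasDerivAt_id t
    have hv : HasDerivAt (fun s : ℝ => 1 + s ^ 2) (2 * t) t := by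
      simpa using ((hasDerivAt_pow 2 t).const_add 1)
    exact hu.div hv hden
  have := h1.mul (hasDerivAt_phi t)
  have h2 : HasDerivAt gfun
      ((1 * (1 + t ^ 2) - t * (2 * t)) / (1 + t ^ 2) ^ 2 * phi t
        + t / (1 + t ^ 2) * (-t * phi t)) t := this
  convert h2 using 1
  field_simp
  ring

lemma gfun_tendsto : Tendsto gfun atTop (nhds 0) := by
  apply squeeze_zero' (Filter.eventually_atTop.mpr ⟨0, fun t ht => ?_⟩)
    (Filter.eventually_atTop.mpr ⟨0, fun t ht => ?_⟩) phi_tendsto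
  · exact mul_nonneg (div_nonneg ht (one_add_sq_pos t).le) (phi_pos t).le
  · have h1 : t / (1 + t ^ 2) ≤ 1 := by
      rw [div_le_one (one_add_sq_pos t)]
      nlinarith
    calc gfun t = t / (1 + t ^ 2) * phi t := rfl
      _ ≤ 1 * phi t := mul_le_mul_of_nonneg_right h1 (phi_pos t).le
      _ = phi t := one_mul _

lemma neg_gfun_deriv_le (t : ℝ) :
    -(phi t * (1 - 2 * t ^ 2 - t ^ 4) / (1 + t ^ 2) ^ 2) ≤ phi t := by
  rw [neg_le, le_div_iff₀ (by positivity)]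
  nlinarith [(phi_pos t).le]

lemma neg_gfun_deriv_integrable :
    Integrable (fun t => -(phi t * (1 - 2 * t ^ 2 - t ^ 4) / (1 + t ^ 2) ^ 2)) := by
  apply Integrable.mono phi_integrable
  · have hphi : Continuous phi := by unfold phi; continuity
    exact (((hphi.mul (by continuity)).div (by continuity)
      (fun t => by positivity)).neg).aestronglyMeasurable
  · refine Filter.Eventually.of_forall fun t => ?_
    rw [Real.norm_eq_abs, Real.norm_eq_abs, abs_le, abs_of_pos (phi_pos t)]
    refine ⟨?_, neg_gfun_deriv_le t⟩
    rw [neg_le_neg_iff, div_le_iff₀ (by positivity)]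
    nlinarith [(phi_pos t).le, sq_nonneg t, sq_nonneg (t ^ 2)]

lemma mills_lower (x : ℝ) : x / (1 + x ^ 2) * phi x ≤ tailI x := by
  have hkey : ∫ t in Set.Ioi x, -(phi t * (1 - 2 * t ^ 2 - t ^ 4) / (1 + t ^ 2) ^ 2) = gfun x := by
    have := integral_Ioi_of_hasDerivAt_of_tendsto' (f := fun t => -gfun t)
      (f' := fun t => -(phi t * (1 - 2 * t ^ 2 - t ^ 4) / (1 + t ^ 2) ^ 2)) (a := x) (m := 0)
      (fun t _ => (hasDerivAt_gfun t).neg)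
      neg_gfun_deriv_integrable.integrableOn
      (by simpa using gfun_tendsto.neg)
    simpa using this
  have h1 : (∫ t in Set.Ioi x, -(phi t * (1 - 2 * t ^ 2 - t ^ 4) / (1 + t ^ 2) ^ 2)) ≤ tailI x := by
    refine setIntegral_mono_on neg_gfun_deriv_integrable.integrableOn
      phi_integrable.integrableOn measurableSet_Ioi fun t _ => neg_gfun_deriv_le t
  rw [hkey] at h1
  exact h1

lemma gaussTail_eq (u : ℝ) : gaussTail u = (Real.sqrt (2 * Real.pi))⁻¹ * tailI u := rfl

lemma sqrt_two_pi_pos : (0:ℝ) < Real.sqrt (2 * Real.pi) :=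
  Real.sqrt_pos.mpr (by positivity)

lemma gaussTail_nonneg (u : ℝ) : 0 ≤ gaussTail u := by
  rw [gaussTail_eq]
  exact mul_nonneg (inv_nonneg.mpr sqrt_two_pi_pos.le) (tailI_nonneg u)

lemma gaussTail_le_one (u : ℝ) : gaussTail u ≤ 1 := by
  rw [gaussTail_eq]
  calc (Real.sqrt (2 * Real.pi))⁻¹ * tailI u
      ≤ (Real.sqrt (2 * Real.pi))⁻¹ * Real.sqrt (2 * Real.pi) :=
        mul_le_mul_of_nonneg_left (tailI_le_total u) (inv_nonneg.mpr sqrt_two_pi_pos.le)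
    _ = 1 := inv_mul_cancel₀ sqrt_two_pi_pos.ne'

/-- For `z > 0` and `x > z`, the derivative of Stein's solution satisfies
`−1/(1+x²) ≤ f_z′(x) ≤ 0`; in particular `|f_z′(x)| ≤ 1/(1+z²)`. -/
theorem stein_deriv_small_right (z : ℝ) (hz : 0 < z) :
    ∀ x : ℝ, z < x →
      (-(1 / (1 + x ^ 2)) ≤ deriv (steinSol z) x ∧ deriv (steinSol z) x ≤ 0) ∧
        |deriv (steinSol z) x| ≤ 1 / (1 + z ^ 2) := by
  intro x hx
  have hx0 : 0 < x := hz.trans hx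
  have hcpos := sqrt_two_pi_pos
  set c := Real.sqrt (2 * Real.pi) with hc
  set A := 1 - gaussTail z with hA
  have hA0 : 0 ≤ A := by rw [hA]; linarith [gaussTail_le_one z]
  have hA1 : A ≤ 1 := by rw [hA]; linarith [gaussTail_nonneg z]
  set E := Real.exp (x ^ 2 / 2) with hE
  have hEpos : 0 < E := Real.exp_pos _
  have hEP : E * phi x = 1 := by
    rw [hE]; unfold phi; rw [← Real.exp_add]
    rw [show x ^ 2 / 2 + -x ^ 2 / 2 = 0 by ring, Real.exp_zero]
  -- derivative computation
  have hdE : HasDerivAt (fun y : ℝ => Real.exp (y ^ 2 / 2)) (x * E) x := by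
    have h1 : HasDerivAt (fun s : ℝ => s ^ 2 / 2) x x := by
      have := (hasDerivAt_pow 2 x).div_const 2
      exact this.congr_deriv (by norm_num)
    have := h1.exp
    convert this using 1
    rw [hE]; ring
  have hT : HasDerivAt gaussTail (c⁻¹ * -phi x) x := by
    have := (hasDerivAt_tailI x).const_mul c⁻¹
    exact this
  have hF : HasDerivAt (fun y => c * Real.exp (y ^ 2 / 2) * A * gaussTail y)
      (c * (x * E) * A * gaussTail x + c * E * A * (c⁻¹ * -phi x)) x :=
    ((hdE.const_mul c).mul_const A).mul hT
  have hev : steinSol z =ᶠ[nhds x] fun y => c * Real.exp (y ^ 2 / 2) * A * gaussTail y := by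
    filter_upwards [Ioi_mem_nhds hx] with y hy
    rw [steinSol, if_neg (not_le.mpr hy.out), hA, hc]
  have hderiv : deriv (steinSol z) x = A * (x * E * tailI x - 1) := by
    rw [hev.deriv_eq, hF.deriv, gaussTail_eq]
    have hcc : c * c⁻¹ = 1 := mul_inv_cancel₀ hcpos.ne'
    linear_combination (x * E * A * tailI x - E * phi x * A) * hcc - A * hEP
  -- Mills bounds
  have hU : x * E * tailI x ≤ 1 := by
    have h1 := mills_upper hx0
    calc x * E * tailI x = E * (x * tailI x) := by ring
      _ ≤ E * phi x := mul_le_mul_of_nonneg_left h1 hEpos.le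
      _ = 1 := hEP
  have hL : x ^ 2 / (1 + x ^ 2) ≤ x * E * tailI x := by
    have h1 := mills_lower x
    have h2 : x * E * (x / (1 + x ^ 2) * phi x) ≤ x * E * tailI x :=
      mul_le_mul_of_nonneg_left h1 (by positivity)
    calc x ^ 2 / (1 + x ^ 2) = x ^ 2 / (1 + x ^ 2) * (E * phi x) := by rw [hEP]; ring
      _ = x * E * (x / (1 + x ^ 2) * phi x) := by ring
      _ ≤ x * E * tailI x := h2
  have hq : (0:ℝ) < 1 / (1 + x ^ 2) := by positivity
  have hqz : 1 / (1 + x ^ 2) ≤ 1 / (1 + z ^ 2) := by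
    apply one_div_le_one_div_of_le (by positivity)
    have : z ^ 2 ≤ x ^ 2 := pow_le_pow_left₀ hz.le hx.le 2
    linarith
  have he1 : x ^ 2 / (1 + x ^ 2) - 1 = -(1 / (1 + x ^ 2)) := by
    field_simp
    ring
  have hle0 : deriv (steinSol z) x ≤ 0 := by
    rw [hderiv]
    nlinarith
  have hge : -(1 / (1 + x ^ 2)) ≤ deriv (steinSol z) x := by
    rw [hderiv]
    nlinarith
  refine ⟨⟨hge, hle0⟩, ?_⟩
  rw [abs_le]
  constructor <;> linarith
end
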